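/- arXiv:2503.00628 — 3 statements merged into one kernel-verified Lean document; each statement's English description precedes it below -/
import Mathlib

section
/- Let K be a field, s ∈ K a unit, q = s², and let n ≥ 1 and 1 ≤ k ≤ n be integers. Let Q be an n × n matrix with integer entries that is antisymmetric (Q_{ij} = −Q_{ji}) and satisfies Q_{ij} = 0 whenever i > k or j > k. Let A = K[y_1^{±1}, …, y_{k−1}^{±1}] be the Laurent polynomial ring in k−1 variables over K (the group algebra of ℤ^{k−1} over K). Define K-linear endomorphisms x_1, …, x_n of A by: for 1 ≤ i ≤ k−1, x_i·f(y_1, …, y_{k−1}) = y_i · f(s^{Q_{i,1}} y_1, …, s^{Q_{i,k−1}} y_{k−1}); x_k·f(y_1, …, y_{k−1}) = f(q^{Q_{k,1}} y_1, …, q^{Q_{k,k−1}} y_{k−1}); and x_m = id for every k < m ≤ n. Then for all 1 ≤ i, j ≤ n one has x_i ∘ x_j = q^{Q_{ij}} · (x_j ∘ x_i) as K-linear endomorphisms of A. -/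
noncomputable section

/-- The Laurent polynomial ring `K[y₁^{±1}, …, y_m^{±1}]`, realized as the group
algebra of `ℤ^m` over `K`. -/
abbrev LaurentAlg (K : Type*) [Field K] (m : ℕ) : Type _ := AddMonoidAlgebra K (Fin m → ℤ)

/-- The variable `y_j` of `K[y₁^{±1}, …, y_m^{±1}]`, as a Laurent monomial. -/
def lvar (K : Type*) [Field K] {m : ℕ} (j : Fin m) : LaurentAlg K m :=
  AddMonoidAlgebra.single (Pi.single j 1) 1

/-- The substitution `y_j ↦ c^{e j} y_j` for a unit `c`: the `K`-linear map sending the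
monomial with exponent vector `v` to `∏ j, (c^{e j})^{v j}` times itself. -/
def lsubst {K : Type*} [Field K] {m : ℕ} (c : Kˣ) (e : Fin m → ℤ) :
    LaurentAlg K m →ₗ[K] LaurentAlg K m :=
  (Finsupp.lsum K fun (v : Fin m → ℤ) =>
    (∏ j, (c : K) ^ (e j * v j)) •
      ((AddMonoidAlgebra.coeffLinearEquiv K).symm.toLinearMap ∘ₗ
        (Finsupp.lsingle v : K →ₗ[K] (Fin m → ℤ) →₀ K) : K →ₗ[K] LaurentAlg K m)) ∘ₗ
    (AddMonoidAlgebra.coeffLinearEquiv K).toLinearMap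

/-- The operators `x₁, …, x_n` of Statement 6 (0-indexed: the index `i : Fin n`
corresponds to the 1-based index `i + 1`).  For `i + 1 < k` (i.e. 1-based index in
`{1, …, k−1}`), `x_{i+1}` multiplies by the variable `y_{i+1}` after substituting
`y_j ↦ s^{Q_{i+1,j}} y_j`; for `i + 1 = k`, it is the substitution
`y_j ↦ q^{Q_{k,j}} y_j` with `q = s²`; for `i + 1 > k` it is the identity. -/
def genOp {K : Type*} [Field K] (s q : Kˣ) {n k : ℕ} (hkn : k ≤ n)
    (Q : Matrix (Fin n) (Fin n) ℤ) (i : Fin n) :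
    LaurentAlg K (k - 1) →ₗ[K] LaurentAlg K (k - 1) :=
  if h : (i : ℕ) + 1 < k then
    (LinearMap.mulLeft K (lvar K (⟨i, by omega⟩ : Fin (k - 1)))).comp
      (lsubst s fun j => Q i (Fin.castLE (by omega) j))
  else if h2 : (i : ℕ) + 1 = k then
    lsubst q fun j => Q i (Fin.castLE (by omega : k - 1 ≤ n) j)
  else LinearMap.id

section Stmt6Aux

variable {K : Type*} [Field K] {m : ℕ}

lemma lsubst_single (c : Kˣ) (e : Fin m → ℤ) (v : Fin m → ℤ) (b : K) :
    lsubst c e (AddMonoidAlgebra.single v b) =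
      (∏ j, (c : K) ^ (e j * v j)) • (AddMonoidAlgebra.single v b : LaurentAlg K m) := by
  rw [lsubst, LinearMap.comp_apply]
  exact (Finsupp.lsum_single K _ v b).trans rfl

lemma lvar_mul_single (i : Fin m) (v : Fin m → ℤ) (b : K) :
    lvar K i * (AddMonoidAlgebra.single v b : LaurentAlg K m)
      = AddMonoidAlgebra.single (Pi.single i 1 + v) b := by
  classical
  simpa [lvar] using AddMonoidAlgebra.single_mul_single (m₁ := Pi.single i 1) (r₁ := (1:K))
    (m₂ := v) (r₂ := b)

lemma prod_single_exp (c : Kˣ) (e : Fin m → ℤ) (i : Fin m) :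
    (∏ j, (c : K) ^ (e j * (Pi.single i 1 : Fin m → ℤ) j)) = (c : K) ^ (e i) := by
  rw [Fintype.prod_eq_single i (fun b hb => by simp [Pi.single_eq_of_ne hb])]
  simp

lemma prod_shift (c : Kˣ) (e : Fin m → ℤ) (i : Fin m) (v : Fin m → ℤ) :
    (∏ j, (c : K) ^ (e j * ((Pi.single i 1 : Fin m → ℤ) + v) j))
      = (c : K) ^ (e i) * ∏ j, (c : K) ^ (e j * v j) := by
  rw [← prod_single_exp c e i, ← Finset.prod_mul_distrib]
  refine Finset.prod_congr rfl fun j _ => ?_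
  rw [Pi.add_apply, mul_add, zpow_add₀ (Units.ne_zero c)]

lemma lalg_hom_ext {N : Type*} [AddCommMonoid N] [Module K N]
    {phi psi : LaurentAlg K m →ₗ[K] N}
    (h : ∀ v x, phi (AddMonoidAlgebra.single v x) = psi (AddMonoidAlgebra.single v x)) :
    phi = psi :=
  AddMonoidAlgebra.lhom_ext' fun a => LinearMap.ext fun x => h a x

lemma caseAA (s q : Kˣ) (hq : q = s ^ 2) (a b : Fin m) (e f : Fin m → ℤ) (d : ℤ)
    (heb : e b = d) (hfa : f a = -d) :
    (LinearMap.mulLeft K (lvar K a) ∘ₗ lsubst s e) ∘ₗ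
        (LinearMap.mulLeft K (lvar K b) ∘ₗ lsubst s f) =
      ((q : K) ^ d) •
        ((LinearMap.mulLeft K (lvar K b) ∘ₗ lsubst s f) ∘ₗ
          (LinearMap.mulLeft K (lvar K a) ∘ₗ lsubst s e)) := by
  refine lalg_hom_ext fun v x => ?_
  simp only [LinearMap.comp_apply, LinearMap.mulLeft_apply, LinearMap.smul_apply,
    lsubst_single, map_smul, lvar_mul_single, smul_smul, prod_shift]
  rw [show (Pi.single a 1 : Fin m → ℤ) + (Pi.single b 1 + v)
      = Pi.single b 1 + (Pi.single a 1 + v) from by rw [add_left_comm]]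
  congr 1
  have hs : (s : K) ≠ 0 := Units.ne_zero s
  have hqv : (q : K) = (s : K) * (s : K) := by rw [hq, Units.val_pow_eq_pow_val]; ring
  rw [heb, hfa, hqv, mul_zpow, zpow_neg]
  have h1 : (s : K) ^ d ≠ 0 := zpow_ne_zero _ hs
  field_simp

lemma caseAB (s q : Kˣ) (a : Fin m) (e g : Fin m → ℤ) (d : ℤ) (hga : g a = -d) :
    (LinearMap.mulLeft K (lvar K a) ∘ₗ lsubst s e) ∘ₗ lsubst q g =
      ((q : K) ^ d) • (lsubst q g ∘ₗ (LinearMap.mulLeft K (lvar K a) ∘ₗ lsubst s e)) := by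
  refine lalg_hom_ext fun v x => ?_
  simp only [LinearMap.comp_apply, LinearMap.mulLeft_apply, LinearMap.smul_apply,
    lsubst_single, map_smul, lvar_mul_single, smul_smul, prod_shift]
  congr 1
  rw [hga, zpow_neg]
  have hq0 : (q : K) ^ d ≠ 0 := zpow_ne_zero _ (Units.ne_zero q)
  field_simp

lemma caseBA (s q : Kˣ) (b : Fin m) (f g : Fin m → ℤ) (d : ℤ) (hgb : g b = d) :
    lsubst q g ∘ₗ (LinearMap.mulLeft K (lvar K b) ∘ₗ lsubst s f) =
      ((q : K) ^ d) • ((LinearMap.mulLeft K (lvar K b) ∘ₗ lsubst s f) ∘ₗ lsubst q g) := by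
  refine lalg_hom_ext fun v x => ?_
  simp only [LinearMap.comp_apply, LinearMap.mulLeft_apply, LinearMap.smul_apply,
    lsubst_single, map_smul, lvar_mul_single, smul_smul, prod_shift]
  congr 1
  rw [hgb]
  ring

end Stmt6Aux

/-- if `Q` is antisymmetric with `Q_{ij} = 0` whenever `i > k` or `j > k`
(1-based), then the operators `x₁, …, x_n` on `K[y₁^{±1}, …, y_{k−1}^{±1}]` satisfy
`x_i ∘ x_j = q^{Q_{ij}} · (x_j ∘ x_i)` with `q = s²`. -/
theorem stmt6 (K : Type*) [Field K] (s q : Kˣ) (hq : q = s ^ 2) (n k : ℕ)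
    (hn : 1 ≤ n) (hk : 1 ≤ k) (hkn : k ≤ n) (Q : Matrix (Fin n) (Fin n) ℤ)
    (hQanti : ∀ i j, Q i j = -Q j i)
    (hQzero : ∀ i j : Fin n, (k < (i : ℕ) + 1 ∨ k < (j : ℕ) + 1) → Q i j = 0)
    (i j : Fin n) :
    genOp s q hkn Q i ∘ₗ genOp s q hkn Q j =
      ((q : K) ^ (Q i j)) • (genOp s q hkn Q j ∘ₗ genOp s q hkn Q i) := by
  classical
  by_cases hi2 : k < (i : ℕ) + 1
  · have h0 : Q i j = 0 := hQzero i j (Or.inl hi2)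
    have hxi : genOp (K := K) s q hkn Q i = LinearMap.id := by
      rw [genOp, dif_neg (by omega), dif_neg (by omega)]
    rw [hxi, h0, zpow_zero, one_smul, LinearMap.id_comp, LinearMap.comp_id]
  by_cases hj2 : k < (j : ℕ) + 1
  · have h0 : Q i j = 0 := hQzero i j (Or.inr hj2)
    have hxj : genOp (K := K) s q hkn Q j = LinearMap.id := by
      rw [genOp, dif_neg (by omega), dif_neg (by omega)]
    rw [hxj, h0, zpow_zero, one_smul, LinearMap.id_comp, LinearMap.comp_id]
  push_neg at hi2 hj2
  rcases lt_or_eq_of_le hi2 with hi | hi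
  · have hgi : genOp (K := K) s q hkn Q i =
        (LinearMap.mulLeft K (lvar K (⟨i, by omega⟩ : Fin (k - 1)))).comp
          (lsubst s fun j' => Q i (Fin.castLE (by omega) j')) := by
      rw [genOp, dif_pos hi]
    rcases lt_or_eq_of_le hj2 with hj | hj
    · -- case AA
      have hgj : genOp (K := K) s q hkn Q j =
          (LinearMap.mulLeft K (lvar K (⟨j, by omega⟩ : Fin (k - 1)))).comp
            (lsubst s fun j' => Q j (Fin.castLE (by omega) j')) := by
        rw [genOp, dif_pos hj]
      rw [hgi, hgj]
      exact caseAA s q hq ⟨i, by omega⟩ ⟨j, by omega⟩ _ _ (Q i j) rfl (hQanti j i)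
    · -- case AB
      have hgj : genOp (K := K) s q hkn Q j =
          lsubst q fun j' => Q j (Fin.castLE (by omega : k - 1 ≤ n) j') := by
        rw [genOp, dif_neg (by omega), dif_pos hj]
      rw [hgi, hgj]
      exact caseAB s q ⟨i, by omega⟩ _ _ (Q i j) (hQanti j i)
  · have hgi : genOp (K := K) s q hkn Q i =
        lsubst q fun j' => Q i (Fin.castLE (by omega : k - 1 ≤ n) j') := by
      rw [genOp, dif_neg (by omega), dif_pos hi]
    rcases lt_or_eq_of_le hj2 with hj | hj
    · -- case BA
      have hgj : genOp (K := K) s q hkn Q j =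
          (LinearMap.mulLeft K (lvar K (⟨j, by omega⟩ : Fin (k - 1)))).comp
            (lsubst s fun j' => Q j (Fin.castLE (by omega) j')) := by
        rw [genOp, dif_pos hj]
      rw [hgi, hgj]
      exact caseBA s q ⟨j, by omega⟩ _ _ (Q i j) rfl
    · -- case BB : i = j
      have hij : i = j := Fin.ext (by omega)
      subst hij
      have h0 : Q i i = 0 := by have := hQanti i i; omega
      rw [h0, zpow_zero, one_smul]

end
end

section
/- Let q ∈ ℂ be nonzero with [m] ≠ 0 for all 1 ≤ m ≤ n. Let V be the ℂ-vector space of functions {0, 1, …, n} → ℂ with standard basis (m_k)_{0 ≤ k ≤ n}, and let W be the ℂ-vector space of functions {0,1}^n → ℂ with standard basis (e_ε)_{ε ∈ {0,1}^n}. Define ℂ-linear maps ι : V → W by ι(m_k) = [n choose k]⁻¹ · Σ_{ε ∈ {0,1}^n, |ε| = k} q^{inv(ε)} e_ε, and π : W → V by π(e_ε) = q^{−coinv(ε)} m_{|ε|}, where |ε| = Σ_i ε_i, inv(ε) = #{(i,j) : i < j, ε_i = 1, ε_j = 0}, and coinv(ε) = #{(i,j) : i < j, ε_i = 0, ε_j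 = 1}. Then the Jones–Wenzl projector p = ι ∘ π : W → W is idempotent: p ∘ p = p. -/
noncomputable section

/-- The balanced quantum integer `[m] = q^{m−1} + q^{m−3} + ⋯ + q^{1−m}`. -/
def qint (q : ℂ) (m : ℕ) : ℂ := ∑ j ∈ Finset.range m, q ^ ((m : ℤ) - 1 - 2 * (j : ℤ))

/-- The quantum factorial `[m]! = [1][2]⋯[m]`, with `[0]! = 1`. -/
def qfact (q : ℂ) : ℕ → ℂ
  | 0 => 1
  | m + 1 => qfact q m * qint q (m + 1)

/-- The Gaussian binomial coefficient `[n choose k] = [n]!/([k]![n−k]!)`. -/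
def qbinom (q : ℂ) (n k : ℕ) : ℂ := qfact q n / (qfact q k * qfact q (n - k))

/-- `|ε| = Σ_i ε_i`, the number of `1`s (`true`s) in `ε ∈ {0,1}^n`. -/
def wt {n : ℕ} (ε : Fin n → Bool) : ℕ := (Finset.univ.filter fun i => ε i = true).card

/-- `inv(ε) = #{(i,j) : i < j, ε_i = 1, ε_j = 0}`. -/
def invE {n : ℕ} (ε : Fin n → Bool) : ℕ :=
  (Finset.univ.filter fun p : Fin n × Fin n =>
    p.1 < p.2 ∧ ε p.1 = true ∧ ε p.2 = false).card

/-- `coinv(ε) = #{(i,j) : i < j, ε_i = 0, ε_j = 1}`. -/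
def coinvE {n : ℕ} (ε : Fin n → Bool) : ℕ :=
  (Finset.univ.filter fun p : Fin n × Fin n =>
    p.1 < p.2 ∧ ε p.1 = false ∧ ε p.2 = true).card

theorem wt_le {n : ℕ} (ε : Fin n → Bool) : wt ε ≤ n := by
  simpa [wt] using Finset.card_filter_le (Finset.univ : Finset (Fin n)) fun i => ε i = true

/-- `|ε|` as an element of `{0, 1, …, n}`. -/
def widx {n : ℕ} (ε : Fin n → Bool) : Fin (n + 1) := ⟨wt ε, Nat.lt_succ_of_le (wt_le ε)⟩

/-- `V = ℂ^{{0,1,…,n}}`, with standard basis `(m_k)_{0 ≤ k ≤ n}`. -/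
abbrev Vsp (n : ℕ) : Type := Fin (n + 1) → ℂ

/-- `W = ℂ^{{0,1}^n}`, with standard basis `(e_ε)_{ε ∈ {0,1}^n}`. -/
abbrev Wsp (n : ℕ) : Type := (Fin n → Bool) → ℂ

/-- The inclusion `ι : V → W`, `ι(m_k) = [n choose k]⁻¹ Σ_{|ε| = k} q^{inv(ε)} e_ε`:
on a general `g ∈ V`, `(ι g)(ε) = [n choose |ε|]⁻¹ · q^{inv(ε)} · g(|ε|)`. -/
def iotaJW (q : ℂ) (n : ℕ) : Vsp n →ₗ[ℂ] Wsp n :=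
  LinearMap.pi fun ε =>
    ((qbinom q n (wt ε))⁻¹ * q ^ invE ε) • LinearMap.proj (widx ε)

/-- The projection `π : W → V`, `π(e_ε) = q^{−coinv(ε)} m_{|ε|}`: on a general `h ∈ W`,
`(π h)(k) = Σ_{|ε| = k} q^{−coinv(ε)} h(ε)`. -/
def piJW (q : ℂ) (n : ℕ) : Wsp n →ₗ[ℂ] Vsp n :=
  LinearMap.pi fun k =>
    ∑ ε ∈ Finset.univ.filter fun ε : Fin n → Bool => widx ε = k,
      (q ^ (-(coinvE ε : ℤ))) • LinearMap.proj ε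


/-! ### Auxiliary lemmas for Statement 15 -/

lemma wt_cons {n : ℕ} (b : Bool) (τ : Fin n → Bool) :
    wt (Fin.cons b τ) = (cond b 1 0) + wt τ := by
  simp only [wt, Finset.card_filter, Fin.sum_univ_succ, Fin.cons_zero, Fin.cons_succ]
  cases b <;> simp

lemma zeros_card {n : ℕ} (τ : Fin n → Bool) :
    (Finset.univ.filter fun i => τ i = false).card = n - wt τ := by
  have h := Finset.card_filter_add_card_filter_not (s := (Finset.univ : Finset (Fin n)))
    (p := fun i => τ i = true)
  simp only [Finset.card_univ, Fintype.card_fin] at h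
  have : (Finset.univ.filter fun i => ¬ τ i = true) = (Finset.univ.filter fun i => τ i = false) := by
    ext i; simp
  rw [this] at h
  simp only [wt]
  omega

lemma invE_cons {n : ℕ} (b : Bool) (τ : Fin n → Bool) :
    invE (Fin.cons b τ) = (cond b (n - wt τ) 0) + invE τ := by
  simp only [invE, Finset.card_filter, Fintype.sum_prod_type, Fin.sum_univ_succ,
    Fin.cons_zero, Fin.cons_succ, Fin.not_lt_zero, Fin.succ_pos, Fin.succ_lt_succ_iff,
    false_and, if_false, true_and]
  cases b
  · simp [← Finset.card_filter]
  · simp [← Finset.card_filter, zeros_card]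

lemma coinvE_cons {n : ℕ} (b : Bool) (τ : Fin n → Bool) :
    coinvE (Fin.cons b τ) = (cond b 0 (wt τ)) + coinvE τ := by
  simp only [coinvE, Finset.card_filter, Fintype.sum_prod_type, Fin.sum_univ_succ,
    Fin.cons_zero, Fin.cons_succ, Fin.not_lt_zero, Fin.succ_pos, Fin.succ_lt_succ_iff,
    false_and, if_false, true_and]
  cases b
  · simp [← Finset.card_filter, wt]
  · simp [← Finset.card_filter]

/-- `S(n,k) = Σ_{|ε| = k} q^{inv(ε) − coinv(ε)}`. -/
def Sjw (q : ℂ) (n k : ℕ) : ℂ :=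
  ∑ ε ∈ Finset.univ.filter fun ε : Fin n → Bool => wt ε = k,
    q ^ ((invE ε : ℤ) - (coinvE ε : ℤ))

lemma Sjw_zero (q : ℂ) (n : ℕ) : Sjw q n 0 = 1 := by
  have hf : (Finset.univ.filter fun ε : Fin n → Bool => wt ε = 0)
      = {fun _ => false} := by
    ext ε
    simp only [Finset.mem_filter, Finset.mem_univ, true_and, Finset.mem_singleton, wt,
      Finset.card_eq_zero, Finset.filter_eq_empty_iff]
    constructor
    · intro h; funext i; by_contra hc
      have hε : ε i = true := by simpa using hc
      exact h trivial hε
    · intro h; subst h; simp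
  have h1 : invE (fun _ : Fin n => false) = 0 := by
    simp [invE, Finset.filter_eq_empty_iff]
  have h2 : coinvE (fun _ : Fin n => false) = 0 := by
    simp [coinvE, Finset.filter_eq_empty_iff]
  simp [Sjw, hf, h1, h2]

lemma Sjw_of_gt (q : ℂ) {n k : ℕ} (h : n < k) : Sjw q n k = 0 := by
  have hf : (Finset.univ.filter fun ε : Fin n → Bool => wt ε = k) = ∅ := by
    rw [Finset.filter_eq_empty_iff]
    intro ε _ hk
    exact absurd (hk ▸ wt_le ε) (Nat.not_le.mpr h)
  simp [Sjw, hf]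

lemma Sjw_succ (q : ℂ) (hq : q ≠ 0) (n k : ℕ) :
    Sjw q (n+1) (k+1)
      = q ^ (-(k+1 : ℤ)) * Sjw q n (k+1) + q ^ ((n : ℤ) - k) * Sjw q n k := by
  have hsum : Sjw q (n+1) (k+1)
      = ∑ b : Bool, ∑ τ : Fin n → Bool,
          if wt (Fin.cons b τ) = k+1 then
            q ^ ((invE (Fin.cons b τ) : ℤ) - (coinvE (Fin.cons b τ) : ℤ)) else 0 := by
    rw [Sjw, Finset.sum_filter, ← Equiv.sum_comp (Fin.consEquiv fun _ => Bool),
      Fintype.sum_prod_type]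
    rfl
  have htrue : ∀ τ : Fin n → Bool,
      (if wt (Fin.cons true τ) = k+1 then
        q ^ ((invE (Fin.cons true τ) : ℤ) - (coinvE (Fin.cons true τ) : ℤ)) else 0)
      = q ^ ((n:ℤ)-k) * (if wt τ = k then q ^ ((invE τ : ℤ) - (coinvE τ : ℤ)) else 0) := by
    intro τ
    rw [wt_cons, invE_cons, coinvE_cons]
    simp only [cond]
    by_cases h : wt τ = k
    · rw [if_pos (by omega), if_pos h, ← zpow_add₀ hq]
      congr 1
      have hle := wt_le τ
      push_cast [Nat.cast_sub (h ▸ hle)]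
      omega
    · rw [if_neg (by omega), if_neg h, mul_zero]
  have hfalse : ∀ τ : Fin n → Bool,
      (if wt (Fin.cons false τ) = k+1 then
        q ^ ((invE (Fin.cons false τ) : ℤ) - (coinvE (Fin.cons false τ) : ℤ)) else 0)
      = q ^ (-(k+1:ℤ)) * (if wt τ = k+1 then q ^ ((invE τ : ℤ) - (coinvE τ : ℤ)) else 0) := by
    intro τ
    rw [wt_cons, invE_cons, coinvE_cons]
    simp only [cond]
    by_cases h : wt τ = k+1
    · rw [if_pos (by omega), if_pos h, ← zpow_add₀ hq]
      congr 1
      push_cast [h]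
      omega
    · rw [if_neg (by omega), if_neg h, mul_zero]
  rw [hsum, Fintype.sum_bool]
  rw [Finset.sum_congr rfl fun τ _ => htrue τ, Finset.sum_congr rfl fun τ _ => hfalse τ,
    ← Finset.mul_sum, ← Finset.mul_sum, Sjw, Sjw, Finset.sum_filter, Finset.sum_filter]
  ring

lemma qint_add (q : ℂ) (hq : q ≠ 0) (a b : ℕ) :
    q ^ (-(b:ℤ)) * qint q a + q ^ (a:ℤ) * qint q b = qint q (a + b) := by
  rw [qint, qint, qint, Nat.add_comm a b, Finset.sum_range_add, Finset.mul_sum,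
    Finset.mul_sum]
  rw [add_comm]
  congr 1
  · exact Finset.sum_congr rfl fun j _ => by
      rw [← zpow_add₀ hq]; congr 1; push_cast; ring
  · exact Finset.sum_congr rfl fun j _ => by
      rw [← zpow_add₀ hq]; congr 1; push_cast; ring

lemma key_identity (q : ℂ) (hq : q ≠ 0) : ∀ n k : ℕ, k ≤ n →
    qfact q k * qfact q (n - k) * Sjw q n k = qfact q n := by
  intro n
  induction n with
  | zero =>
    intro k hk
    interval_cases k
    simp [qfact, Sjw_zero]
  | succ n ih =>
    intro k hk
    match k, hk with
    | 0, _ => simp [qfact, Sjw_zero]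
    | k+1, hk =>
      rw [Sjw_succ q hq n k]
      by_cases hkn : k + 1 ≤ n
      · obtain ⟨d, rfl⟩ : ∃ d, n = k + 1 + d := ⟨n - (k+1), by omega⟩
        have IH1 := ih (k+1) hkn
        have IH2 := ih k (by omega)
        rw [show k + 1 + d - (k+1) = d from by omega] at IH1
        rw [show k + 1 + d - k = d + 1 from by omega] at IH2
        have qadd := qint_add q hq (d+1) (k+1)
        rw [show k + 1 + d + 1 - (k + 1) = d + 1 from by omega]
        rw [show ((k + 1 + d : ℕ) : ℤ) - (k : ℤ) = ((d + 1 : ℕ) : ℤ) from by push_cast; ring]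
        rw [show (-(k + 1 : ℤ)) = (-((k+1 : ℕ) : ℤ)) from by push_cast; ring]
        rw [show qfact q (k+1) = qfact q k * qint q (k+1) from rfl]
        rw [show qfact q (d+1) = qfact q d * qint q (d+1) from rfl]
        rw [show qfact q (k+1+d+1) = qfact q (k+1+d) * qint q (k+1+d+1) from rfl]
        rw [show d + 1 + (k + 1) = k + 1 + d + 1 from by omega] at qadd
        rw [show qfact q (k+1) = qfact q k * qint q (k+1) from rfl] at IH1
        rw [show qfact q (d+1) = qfact q d * qint q (d+1) from rfl] at IH2
        linear_combination (q ^ (-((k+1:ℕ) : ℤ)) * qint q (d+1)) * IH1 +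
          (q ^ (((d+1:ℕ)) : ℤ) * qint q (k+1)) * IH2 + qfact q (k+1+d) * qadd
      · have hk' : k = n := by omega
        subst hk'
        rw [Sjw_of_gt q (Nat.lt_succ_self k)]
        have IH2 := ih k le_rfl
        rw [Nat.sub_self] at IH2
        rw [show k + 1 - (k+1) = 0 from by omega]
        rw [show ((k : ℕ) : ℤ) - (k : ℤ) = ((0:ℕ) : ℤ) from by push_cast; ring]
        rw [show qfact q (k+1) = qfact q k * qint q (k+1) from rfl]
        simp only [qfact] at IH2 ⊢
        rw [Nat.cast_zero, zpow_zero]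
        linear_combination qint q (k+1) * IH2

lemma qfact_ne_zero (q : ℂ) (n : ℕ)
    (hint : ∀ m : ℕ, 1 ≤ m → m ≤ n → qint q m ≠ 0) :
    ∀ m : ℕ, m ≤ n → qfact q m ≠ 0 := by
  intro m
  induction m with
  | zero => intro _; simp [qfact]
  | succ m ih =>
    intro hm
    show qfact q m * qint q (m+1) ≠ 0
    exact mul_ne_zero (ih (by omega)) (hint (m+1) (by omega) hm)

lemma qbinom_inv_mul_Sjw (q : ℂ) (hq : q ≠ 0) (n k : ℕ) (hk : k ≤ n)
    (hint : ∀ m : ℕ, 1 ≤ m → m ≤ n → qint q m ≠ 0) :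
    (qbinom q n k)⁻¹ * Sjw q n k = 1 := by
  have hn := qfact_ne_zero q n hint n le_rfl
  rw [qbinom, inv_div, div_mul_eq_mul_div, key_identity q hq n k hk, div_self hn]

lemma pi_comp_iota (q : ℂ) (hq : q ≠ 0) (n : ℕ)
    (hint : ∀ m : ℕ, 1 ≤ m → m ≤ n → qint q m ≠ 0) :
    piJW q n ∘ₗ iotaJW q n = LinearMap.id := by
  apply LinearMap.ext
  intro g
  funext k
  simp only [LinearMap.comp_apply, LinearMap.id_apply, piJW, iotaJW, LinearMap.pi_apply,
    LinearMap.sum_apply, LinearMap.smul_apply, LinearMap.proj_apply, smul_eq_mul]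
  have hterm : ∀ ε ∈ Finset.univ.filter fun ε : Fin n → Bool => widx ε = k,
      q ^ (-(coinvE ε : ℤ)) * ((qbinom q n (wt ε))⁻¹ * q ^ invE ε * g (widx ε))
        = (qbinom q n (k:ℕ))⁻¹ * q ^ ((invE ε : ℤ) - (coinvE ε : ℤ)) * g k := by
    intro ε hε
    rw [Finset.mem_filter] at hε
    have h1 : wt ε = (k : ℕ) := by
      have := congrArg Fin.val hε.2
      simpa [widx] using this
    rw [hε.2, h1, zpow_sub₀ hq, zpow_natCast]
    field_simp
    rw [zpow_neg, mul_comm _ (g k), inv_mul_cancel_right₀ (zpow_ne_zero _ hq)]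
  rw [Finset.sum_congr rfl hterm, ← Finset.sum_mul, ← Finset.mul_sum]
  have hfilter : (Finset.univ.filter fun ε : Fin n → Bool => widx ε = k)
      = Finset.univ.filter fun ε : Fin n → Bool => wt ε = (k : ℕ) := by
    apply Finset.filter_congr
    intro ε _
    simp [widx, Fin.ext_iff]
  rw [hfilter]
  rw [show (∑ ε ∈ Finset.univ.filter fun ε : Fin n → Bool => wt ε = (k:ℕ),
        q ^ ((invE ε : ℤ) - (coinvE ε : ℤ))) = Sjw q n (k:ℕ) from rfl]
  rw [qbinom_inv_mul_Sjw q hq n (k:ℕ) (by omega) hint, one_mul]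

/-- if `q ≠ 0` and `[m] ≠ 0` for all `1 ≤ m ≤ n`, then the Jones–Wenzl
projector `p = ι ∘ π : W → W` is idempotent. -/
theorem stmt15 (q : ℂ) (hq : q ≠ 0) (n : ℕ)
    (hint : ∀ m : ℕ, 1 ≤ m → m ≤ n → qint q m ≠ 0) :
    (iotaJW q n ∘ₗ piJW q n) ∘ₗ (iotaJW q n ∘ₗ piJW q n) = iotaJW q n ∘ₗ piJW q n := by
  have h := pi_comp_iota q hq n hint
  calc (iotaJW q n ∘ₗ piJW q n) ∘ₗ (iotaJW q n ∘ₗ piJW q n)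
      = iotaJW q n ∘ₗ (piJW q n ∘ₗ iotaJW q n) ∘ₗ piJW q n := by
        simp only [LinearMap.comp_assoc]
    _ = iotaJW q n ∘ₗ piJW q n := by rw [h, LinearMap.id_comp]

end
end

section
/- Let q ∈ ℂ be nonzero. The map R := θ ∘ f̃ ∘ τ is a bijective ℂ-linear endomorphism of V ⊗ V that commutes with ΔE, ΔF, and ΔK: R ∘ ΔE = ΔE ∘ R, R ∘ ΔF = ΔF ∘ R, and R ∘ ΔK = ΔK ∘ R. -/
noncomputable section

open TensorProduct

/-- `V = ℂ²`, with basis `m₀ = (1,0)`, `m₁ = (0,1)`. -/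
abbrev Vf : Type := Fin 2 → ℂ

/-- `E m₀ = 0`, `E m₁ = m₀`. -/
def Eop : Vf →ₗ[ℂ] Vf := Matrix.toLin' !![0, 1; 0, 0]

/-- `F m₀ = m₁`, `F m₁ = 0`. -/
def Fop : Vf →ₗ[ℂ] Vf := Matrix.toLin' !![0, 0; 1, 0]

/-- `K m₀ = q m₀`, `K m₁ = q⁻¹ m₁`. -/
def Kop (q : ℂ) : Vf →ₗ[ℂ] Vf := Matrix.toLin' !![q, 0; 0, q⁻¹]

/-- `K⁻¹ m₀ = q⁻¹ m₀`, `K⁻¹ m₁ = q m₁`. -/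
def Kinvop (q : ℂ) : Vf →ₗ[ℂ] Vf := Matrix.toLin' !![q⁻¹, 0; 0, q]

/-- `ΔE = E⊗1 + K⊗E` on `V ⊗ V`. -/
def DE (q : ℂ) : Vf ⊗[ℂ] Vf →ₗ[ℂ] Vf ⊗[ℂ] Vf :=
  TensorProduct.map Eop LinearMap.id + TensorProduct.map (Kop q) Eop

/-- `ΔF = F⊗K⁻¹ + 1⊗F` on `V ⊗ V`. -/
def DF (q : ℂ) : Vf ⊗[ℂ] Vf →ₗ[ℂ] Vf ⊗[ℂ] Vf :=
  TensorProduct.map Fop (Kinvop q) + TensorProduct.map LinearMap.id Fop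

/-- `ΔK = K⊗K` on `V ⊗ V`. -/
def DK (q : ℂ) : Vf ⊗[ℂ] Vf →ₗ[ℂ] Vf ⊗[ℂ] Vf := TensorProduct.map (Kop q) (Kop q)

/-- The swap `τ : u⊗v ↦ v⊗u` on `V ⊗ V`. -/
def tauOp : Vf ⊗[ℂ] Vf →ₗ[ℂ] Vf ⊗[ℂ] Vf := (TensorProduct.comm ℂ Vf Vf).toLinearMap

/-- The basis `(m_a ⊗ m_b)_{a,b ∈ {0,1}}` of `V ⊗ V`. -/
def Bvv : Module.Basis (Fin 2 × Fin 2) ℂ (Vf ⊗[ℂ] Vf) :=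
  (Pi.basisFun ℂ (Fin 2)).tensorProduct (Pi.basisFun ℂ (Fin 2))

/-- `f̃ : V⊗V → V⊗V` with `f̃(m₀⊗m₀) = q⁻¹ m₀⊗m₀`, `f̃(m₁⊗m₁) = q⁻¹ m₁⊗m₁`,
`f̃(m₀⊗m₁) = m₀⊗m₁`, `f̃(m₁⊗m₀) = m₁⊗m₀`. -/
def ftilde (q : ℂ) : Vf ⊗[ℂ] Vf →ₗ[ℂ] Vf ⊗[ℂ] Vf :=
  Bvv.constr ℂ fun p => (if p.1 = p.2 then q⁻¹ else 1) • Bvv p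

/-- `θ = id − (q − q⁻¹)·(F⊗E)` on `V ⊗ V`. -/
def thetaOp (q : ℂ) : Vf ⊗[ℂ] Vf →ₗ[ℂ] Vf ⊗[ℂ] Vf :=
  LinearMap.id - (q - q⁻¹) • TensorProduct.map Fop Eop

/-- `R = θ ∘ f̃ ∘ τ`. -/
def Rop (q : ℂ) : Vf ⊗[ℂ] Vf →ₗ[ℂ] Vf ⊗[ℂ] Vf := thetaOp q ∘ₗ ftilde q ∘ₗ tauOp

/-! ### Auxiliary lemmas -/

def mvec (i : Fin 2) : Vf := Pi.basisFun ℂ (Fin 2) i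

lemma Eop_m0 : Eop (mvec 0) = 0 := by
  funext i; fin_cases i <;>
    simp [Eop, mvec, Matrix.toLin'_apply, Matrix.mulVec, dotProduct, Pi.single]

lemma Eop_m1 : Eop (mvec 1) = mvec 0 := by
  funext i; fin_cases i <;>
    simp [Eop, mvec, Matrix.toLin'_apply, Matrix.mulVec, dotProduct, Pi.single]

lemma Fop_m0 : Fop (mvec 0) = mvec 1 := by
  funext i; fin_cases i <;>
    simp [Fop, mvec, Matrix.toLin'_apply, Matrix.mulVec, dotProduct, Pi.single]

lemma Fop_m1 : Fop (mvec 1) = 0 := by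
  funext i; fin_cases i <;>
    simp [Fop, mvec, Matrix.toLin'_apply, Matrix.mulVec, dotProduct, Pi.single]

lemma Kop_m0 (q : ℂ) : Kop q (mvec 0) = q • mvec 0 := by
  funext i; fin_cases i <;>
    simp [Kop, mvec, Matrix.toLin'_apply, Matrix.mulVec, dotProduct, Pi.single]

lemma Kop_m1 (q : ℂ) : Kop q (mvec 1) = q⁻¹ • mvec 1 := by
  funext i; fin_cases i <;>
    simp [Kop, mvec, Matrix.toLin'_apply, Matrix.mulVec, dotProduct, Pi.single]

lemma Kinvop_m0 (q : ℂ) : Kinvop q (mvec 0) = q⁻¹ • mvec 0 := by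
  funext i; fin_cases i <;>
    simp [Kinvop, mvec, Matrix.toLin'_apply, Matrix.mulVec, dotProduct, Pi.single]

lemma Kinvop_m1 (q : ℂ) : Kinvop q (mvec 1) = q • mvec 1 := by
  funext i; fin_cases i <;>
    simp [Kinvop, mvec, Matrix.toLin'_apply, Matrix.mulVec, dotProduct, Pi.single]

lemma Bvv_apply (i j : Fin 2) : Bvv (i, j) = mvec i ⊗ₜ[ℂ] mvec j := by
  simp [Bvv, Module.Basis.tensorProduct_apply, mvec]

lemma ftilde_basis (q : ℂ) (i j : Fin 2) :
    ftilde q (mvec i ⊗ₜ[ℂ] mvec j) = (if i = j then q⁻¹ else 1) • (mvec i ⊗ₜ[ℂ] mvec j) := by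
  rw [← Bvv_apply, ftilde, Bvv.constr_basis]

/-- inverse of `f̃`. -/
def ftildeInv (q : ℂ) : Vf ⊗[ℂ] Vf →ₗ[ℂ] Vf ⊗[ℂ] Vf :=
  Bvv.constr ℂ fun p => (if p.1 = p.2 then q else 1) • Bvv p

lemma ftildeInv_basis (q : ℂ) (i j : Fin 2) :
    ftildeInv q (mvec i ⊗ₜ[ℂ] mvec j) = (if i = j then q else 1) • (mvec i ⊗ₜ[ℂ] mvec j) := by
  rw [← Bvv_apply, ftildeInv, Bvv.constr_basis]

/-- inverse of `R`. -/
def RopInv (q : ℂ) : Vf ⊗[ℂ] Vf →ₗ[ℂ] Vf ⊗[ℂ] Vf :=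
  tauOp ∘ₗ ftildeInv q ∘ₗ (LinearMap.id + (q - q⁻¹) • TensorProduct.map Fop Eop)

set_option maxHeartbeats 1000000 in
set_option synthInstance.maxHeartbeats 400000 in
lemma Rop_RopInv (q : ℂ) (hq : q ≠ 0) : Rop q ∘ₗ RopInv q = LinearMap.id := by
  apply Bvv.ext
  rintro ⟨i, j⟩
  fin_cases i <;> fin_cases j <;>
    simp only [LinearMap.comp_apply, LinearMap.add_apply, LinearMap.id_apply, Bvv_apply] <;>
    simp [ Rop, RopInv, thetaOp, tauOp, ftilde_basis, ftildeInv_basis,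
      Eop_m0, Eop_m1, Fop_m0, Fop_m1, TensorProduct.tmul_smul, ← TensorProduct.smul_tmul',
      smul_smul, smul_sub, smul_add, sub_smul, add_smul] <;>
    match_scalars <;> field_simp <;> ring

set_option maxHeartbeats 1000000 in
set_option synthInstance.maxHeartbeats 400000 in
lemma RopInv_Rop (q : ℂ) (hq : q ≠ 0) : RopInv q ∘ₗ Rop q = LinearMap.id := by
  apply Bvv.ext
  rintro ⟨i, j⟩
  fin_cases i <;> fin_cases j <;>
    simp only [LinearMap.comp_apply, LinearMap.add_apply, LinearMap.id_apply, Bvv_apply] <;>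
    simp [ Rop, RopInv, thetaOp, tauOp, ftilde_basis, ftildeInv_basis,
      Eop_m0, Eop_m1, Fop_m0, Fop_m1, TensorProduct.tmul_smul, ← TensorProduct.smul_tmul',
      smul_smul, smul_sub, smul_add, sub_smul, add_smul] <;>
    match_scalars <;> field_simp <;> ring

set_option maxHeartbeats 1000000 in
set_option synthInstance.maxHeartbeats 400000 in
/-- `R = θ ∘ f̃ ∘ τ` is a bijective ℂ-linear endomorphism of `V ⊗ V`
commuting with `ΔE`, `ΔF` and `ΔK`. -/
theorem stmt17 (q : ℂ) (hq : q ≠ 0) :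
    Function.Bijective (Rop q) ∧
      Rop q ∘ₗ DE q = DE q ∘ₗ Rop q ∧
      Rop q ∘ₗ DF q = DF q ∘ₗ Rop q ∧
      Rop q ∘ₗ DK q = DK q ∘ₗ Rop q := by
  refine ⟨⟨?_, ?_⟩, ?_, ?_, ?_⟩
  · have h := RopInv_Rop q hq
    intro x y hxy
    have := congrArg (fun f => f x) h
    have h2 := congrArg (fun f => f y) (RopInv_Rop q hq)
    simp only [LinearMap.comp_apply, LinearMap.id_apply] at this h2
    rw [← this, ← h2, hxy]
  · intro y
    refine ⟨RopInv q y, ?_⟩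
    have := congrArg (fun f => f y) (Rop_RopInv q hq)
    simpa using this
  · apply Bvv.ext
    rintro ⟨i, j⟩
    fin_cases i <;> fin_cases j <;>
      simp only [LinearMap.comp_apply, LinearMap.add_apply, LinearMap.id_apply, Bvv_apply] <;>
      simp [ Rop, DE, thetaOp, tauOp, ftilde_basis,
        Eop_m0, Eop_m1, Fop_m0, Fop_m1, Kop_m0, Kop_m1,
        TensorProduct.tmul_smul, ← TensorProduct.smul_tmul', smul_smul] <;>
      match_scalars <;> field_simp <;> ring
  · apply Bvv.ext
    rintro ⟨i, j⟩
    fin_cases i <;> fin_cases j <;>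
      simp only [LinearMap.comp_apply, LinearMap.add_apply, LinearMap.id_apply, Bvv_apply] <;>
      simp [ Rop, DF, thetaOp, tauOp, ftilde_basis,
        Eop_m0, Eop_m1, Fop_m0, Fop_m1, Kinvop_m0, Kinvop_m1,
        TensorProduct.tmul_smul, ← TensorProduct.smul_tmul', smul_smul] <;>
      match_scalars <;> field_simp <;> ring
  · apply Bvv.ext
    rintro ⟨i, j⟩
    fin_cases i <;> fin_cases j <;>
      simp only [LinearMap.comp_apply, LinearMap.add_apply, LinearMap.id_apply, Bvv_apply] <;>
      simp [ Rop, DK, thetaOp, tauOp, ftilde_basis,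
        Eop_m0, Eop_m1, Fop_m0, Fop_m1, Kop_m0, Kop_m1,
        TensorProduct.tmul_smul, ← TensorProduct.smul_tmul', smul_smul] <;>
      match_scalars <;> field_simp <;> ring

end
end
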